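/- arXiv:1102.0426 — 2 statements merged into one kernel-verified Lean document; each statement's English description precedes it below -/
import Mathlib

section
/- With D a non-Lagrangian 2-distribution on U ⊆ ℝ⁴, D' its Ω-orthogonal complement, ρ := ι_Z Ω, ρ' := ι_{Z'} Ω and σ := ρ − ρ' the invariant 1-forms: one has Ω ∧ dσ = 0, and consequently Ω ∧ dρ = Ω ∧ dρ' as 4-forms on U (so the first scalar invariant I¹ takes the same value on D and on D'). -/
noncomputable section

/-- Vectors of `ℝ⁴`, with coordinates `(x,p,y,q) = (v 0, v 1, v 2, v 3)`. -/
abbrev Vec : Type := Fin 4 → ℝ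

/-- The standard symplectic form `Ω = dp∧dx + dq∧dy` on `ℝ⁴`. -/
def Omega (u v : Vec) : ℝ := u 1 * v 0 - u 0 * v 1 + u 3 * v 2 - u 2 * v 3

/-- Lie bracket of vector fields. -/
def vbracket (X Y : Vec → Vec) : Vec → Vec :=
  fun x => fderiv ℝ Y x (X x) - fderiv ℝ X x (Y x)

/-- Exterior derivative of a 1-form (a pointwise family of 1-form values). -/
def d1 (α : Vec → Vec → ℝ) : Vec → Vec → Vec → ℝ :=
  fun x u v => fderiv ℝ (fun y => α y v) x u - fderiv ℝ (fun y => α y u) x v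

/-- Exterior derivative of a 2-form. -/
def d2 (b : Vec → Vec → Vec → ℝ) : Vec → Vec → Vec → Vec → ℝ :=
  fun x u v w => fderiv ℝ (fun y => b y v w) x u - fderiv ℝ (fun y => b y u w) x v
    + fderiv ℝ (fun y => b y u v) x w

/-- Exterior derivative of a 3-form. -/
def d3 (c : Vec → Vec → Vec → Vec → ℝ) : Vec → Vec → Vec → Vec → Vec → ℝ :=
  fun x u v w z =>
    fderiv ℝ (fun y => c y v w z) x u - fderiv ℝ (fun y => c y u w z) x v
      + fderiv ℝ (fun y => c y u v z) x w - fderiv ℝ (fun y => c y u v w) x z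

/-- Wedge product of two 1-form values. -/
def w11 (a b : Vec → ℝ) : Vec → Vec → ℝ := fun u v => a u * b v - a v * b u

/-- Wedge product of a 2-form value with a 1-form value. -/
def w21 (b : Vec → Vec → ℝ) (t : Vec → ℝ) : Vec → Vec → Vec → ℝ :=
  fun u v w => b u v * t w - b u w * t v + b v w * t u

/-- Wedge product of two 2-form values. -/
def w22 (a b : Vec → Vec → ℝ) : Vec → Vec → Vec → Vec → ℝ :=
  fun u v w z => a u v * b w z - a u w * b v z + a u z * b v w
    + a v w * b u z - a v z * b u w + a w z * b u v

/-! On `U` the projector `P` is `Ω`-symmetric, so `ω(u, v) = Ω(Pu, v)` there. Differentiating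
`P² = P` and this symmetry shows that `DP` is `Ω`-symmetric and exchanges `D` and `D'`, while
differentiating `PX = X`, `PY = Y`, `PX' = PY' = 0` expresses `Z - Z'` through `DP`. Expanding in
the frame then gives `dω = Ω ∧ σ`. Since `Ω` is constant, `Ω ∧ dσ = d(Ω ∧ σ) = ddω = 0`, and the
second claim is the first one written out for `σ = ρ - ρ'`. -/

open Filter Topology

section Omega

variable (u u' v v' : Vec) (c : ℝ)

lemma Omega_add_left : Omega (u + u') v = Omega u v + Omega u' v := by
  simp only [Omega, Pi.add_apply]; ring

lemma Omega_sub_left : Omega (u - u') v = Omega u v - Omega u' v := by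
  simp only [Omega, Pi.sub_apply]; ring

lemma Omega_smul_left : Omega (c • u) v = c * Omega u v := by
  simp only [Omega, Pi.smul_apply, smul_eq_mul]; ring

lemma Omega_add_right : Omega u (v + v') = Omega u v + Omega u v' := by
  simp only [Omega, Pi.add_apply]; ring

lemma Omega_sub_right : Omega u (v - v') = Omega u v - Omega u v' := by
  simp only [Omega, Pi.sub_apply]; ring

lemma Omega_smul_right : Omega u (c • v) = c * Omega u v := by
  simp only [Omega, Pi.smul_apply, smul_eq_mul]; ring

lemma Omega_zero_left : Omega 0 v = 0 := by simp [Omega]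

lemma Omega_zero_right : Omega u 0 = 0 := by simp [Omega]

lemma Omega_comm : Omega u v = -Omega v u := by simp only [Omega]; ring

lemma Omega_self : Omega u u = 0 := by simp only [Omega]; ring

end Omega

def omegaRight (b : Vec) : Vec →L[ℝ] ℝ :=
  b 0 • ContinuousLinearMap.proj 1 - b 1 • ContinuousLinearMap.proj 0
    + b 2 • ContinuousLinearMap.proj 3 - b 3 • ContinuousLinearMap.proj 2

@[simp]
lemma omegaRight_apply (b u : Vec) : omegaRight b u = Omega u b := by
  simp only [omegaRight, Omega, sub_apply, add_apply, smul_apply, ContinuousLinearMap.proj_apply,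
    smul_eq_mul]
  ring

/-- `(X, Y, X', Y')` is a symplectic basis adapted to `D = ⟨X, Y⟩` and `D' = ⟨X', Y'⟩`. -/
structure IsSymplecticFrame (X Y X' Y' : Vec) : Prop where
  omega_XY : Omega X Y = 1
  omega_X'Y' : Omega X' Y' = 1
  omega_XX' : Omega X X' = 0
  omega_XY' : Omega X Y' = 0
  omega_YX' : Omega Y X' = 0
  omega_YY' : Omega Y Y' = 0

structure IsFrameProjection (P : Vec →L[ℝ] Vec) (X Y X' Y' : Vec) : Prop
    extends IsSymplecticFrame X Y X' Y' where
  apply_X : P X = X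
  apply_Y : P Y = Y
  apply_X' : P X' = 0
  apply_Y' : P Y' = 0

namespace IsSymplecticFrame

variable {X Y X' Y' : Vec} (hF : IsSymplecticFrame X Y X' Y')
include hF

lemma omega_YX : Omega Y X = -1 := by rw [Omega_comm, hF.omega_XY]
lemma omega_Y'X' : Omega Y' X' = -1 := by rw [Omega_comm, hF.omega_X'Y']
lemma omega_X'X : Omega X' X = 0 := by rw [Omega_comm, hF.omega_XX', neg_zero]
lemma omega_Y'X : Omega Y' X = 0 := by rw [Omega_comm, hF.omega_XY', neg_zero]
lemma omega_X'Y : Omega X' Y = 0 := by rw [Omega_comm, hF.omega_YX', neg_zero]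
lemma omega_Y'Y : Omega Y' Y = 0 := by rw [Omega_comm, hF.omega_YY', neg_zero]

lemma linearIndependent : LinearIndependent ℝ ![X, Y, X', Y'] := by
  rw [Fintype.linearIndependent_iff]
  intro g hg
  have pair (w : Vec) :
      g 0 * Omega X w + g 1 * Omega Y w + g 2 * Omega X' w + g 3 * Omega Y' w = 0 := by
    have := congrArg (Omega · w) hg
    simpa [Fin.sum_univ_four, Omega_add_left, Omega_smul_left, Omega_zero_left] using this
  have eX := pair X
  have eY := pair Y
  have eX' := pair X'
  have eY' := pair Y'
  simp only [Omega_self, hF.omega_XY, hF.omega_X'Y', hF.omega_XX', hF.omega_XY',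
    hF.omega_YX', hF.omega_YY', hF.omega_YX, hF.omega_Y'X', hF.omega_X'X, hF.omega_Y'X,
    hF.omega_X'Y, hF.omega_Y'Y] at eX eY eX' eY'
  intro i
  fin_cases i
  exacts [show g 0 = 0 by linarith, show g 1 = 0 by linarith, show g 2 = 0 by linarith,
    show g 3 = 0 by linarith]

lemma exists_coords (v : Vec) : ∃ a b c d : ℝ, v = a • X + b • Y + c • X' + d • Y' := by
  have hspan : Submodule.span ℝ (Set.range ![X, Y, X', Y']) = ⊤ :=
    hF.linearIndependent.span_eq_top_of_card_eq_finrank (by simp)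
  have hv : v ∈ Submodule.span ℝ (Set.range ![X, Y, X', Y']) := hspan ▸ Submodule.mem_top
  obtain ⟨c, hc⟩ := (Submodule.mem_span_range_iff_exists_fun ℝ).mp hv
  exact ⟨c 0, c 1, c 2, c 3, by simp [← hc, Fin.sum_univ_four]⟩

end IsSymplecticFrame

namespace IsFrameProjection

variable {P : Vec →L[ℝ] Vec} {X Y X' Y' : Vec} (hP : IsFrameProjection P X Y X' Y')
include hP

lemma apply_eq (v : Vec) : P v = Omega v Y • X - Omega v X • Y := by
  have hF := hP.toIsSymplecticFrame
  obtain ⟨a, b, c, d, rfl⟩ := hF.exists_coords v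
  simp only [map_add, map_smul, hP.apply_X, hP.apply_Y, hP.apply_X', hP.apply_Y', smul_zero,
    add_zero, Omega_add_left, Omega_smul_left, Omega_self, hF.omega_XY, hF.omega_YX,
    hF.omega_X'X, hF.omega_X'Y, hF.omega_Y'X, hF.omega_Y'Y]
  module

lemma omega_apply_symm (u v : Vec) : Omega (P u) v = Omega u (P v) := by
  rw [hP.apply_eq, hP.apply_eq]
  simp only [Omega_sub_left, Omega_sub_right, Omega_smul_left, Omega_smul_right]
  rw [Omega_comm X v, Omega_comm Y v]
  ring

lemma apply_apply (v : Vec) : P (P v) = P v := by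
  rw [hP.apply_eq v, map_sub, map_smul, map_smul, hP.apply_X, hP.apply_Y]

variable {Q : Vec →L[ℝ] Vec →L[ℝ] Vec}

lemma omega_apply_eq_zero_of_fixed (hQidem : ∀ u v, Q u (P v) + P (Q u v) = Q u v)
    {a b : Vec} (ha : P a = a) (hb : P b = b) (u : Vec) : Omega (Q u a) b = 0 := by
  have hPQ : P (Q u a) = 0 := by simpa [ha] using hQidem u a
  rw [← hb, ← hP.omega_apply_symm, hPQ, Omega_zero_left]

lemma omega_apply_eq_zero_of_apply_eq_zero (hQidem : ∀ u v, Q u (P v) + P (Q u v) = Q u v)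
    {a b : Vec} (ha : P a = 0) (hb : P b = 0) (u : Vec) : Omega (Q u a) b = 0 := by
  have hPQ : P (Q u a) = Q u a := by simpa [ha] using hQidem u a
  rw [← hPQ, hP.omega_apply_symm, hb, Omega_zero_right]

/-- For `Q = DP` the left side is `dω(u, v, w)` and `Q X Y - Q Y X + Q X' Y' - Q Y' X' = Z - Z'`:
this is `dω = Ω ∧ σ` at a point. -/
lemma cyclic_sum_eq_wedge (hQsymm : ∀ u a b, Omega (Q u a) b = Omega a (Q u b))
    (hQidem : ∀ u v, Q u (P v) + P (Q u v) = Q u v) (u v w : Vec) :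
    Omega (Q u v) w - Omega (Q v u) w + Omega (Q w u) v =
      w21 Omega (Omega (Q X Y - Q Y X + Q X' Y' - Q Y' X')) u v w := by
  have hF := hP.toIsSymplecticFrame
  obtain ⟨a1, a2, a3, a4, rfl⟩ := hF.exists_coords u
  obtain ⟨b1, b2, b3, b4, rfl⟩ := hF.exists_coords v
  obtain ⟨c1, c2, c3, c4, rfl⟩ := hF.exists_coords w
  have hXX := hP.omega_apply_eq_zero_of_fixed hQidem hP.apply_X hP.apply_X
  have hXY := hP.omega_apply_eq_zero_of_fixed hQidem hP.apply_X hP.apply_Y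
  have hYX := hP.omega_apply_eq_zero_of_fixed hQidem hP.apply_Y hP.apply_X
  have hYY := hP.omega_apply_eq_zero_of_fixed hQidem hP.apply_Y hP.apply_Y
  have hX'X' := hP.omega_apply_eq_zero_of_apply_eq_zero hQidem hP.apply_X' hP.apply_X'
  have hX'Y' := hP.omega_apply_eq_zero_of_apply_eq_zero hQidem hP.apply_X' hP.apply_Y'
  have hY'X' := hP.omega_apply_eq_zero_of_apply_eq_zero hQidem hP.apply_Y' hP.apply_X'
  have hY'Y' := hP.omega_apply_eq_zero_of_apply_eq_zero hQidem hP.apply_Y' hP.apply_Y'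
  have swap (t a b : Vec) : Omega (Q t a) b = -Omega (Q t b) a := by
    rw [hQsymm, Omega_comm]
  simp only [w21, map_add, map_smul, add_apply, smul_apply, Omega_add_left, Omega_smul_left,
    Omega_add_right, Omega_smul_right, Omega_sub_left]
  simp only [hXX, hXY, hYX, hYY, hX'X', hX'Y', hY'X', hY'Y', swap _ X' X, swap _ X' Y,
    swap _ Y' X, swap _ Y' Y, hF.omega_XY, hF.omega_X'Y', hF.omega_XX', hF.omega_XY',
    hF.omega_YX', hF.omega_YY', hF.omega_YX, hF.omega_Y'X', hF.omega_X'X, hF.omega_Y'X,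
    hF.omega_X'Y, hF.omega_Y'Y, Omega_self]
  ring

end IsFrameProjection

section Calculus

variable {E F G : Type*} [NormedAddCommGroup E] [NormedSpace ℝ E] [NormedAddCommGroup F]
  [NormedSpace ℝ F] [NormedAddCommGroup G] [NormedSpace ℝ G] {x : E}

lemma fderiv_clm_apply_const {c : E → F →L[ℝ] G} (hc : DifferentiableAt ℝ c x) (a : F) (u : E) :
    fderiv ℝ (fun t => c t a) x u = fderiv ℝ c x u a := by
  simp [fderiv_clm_apply hc (differentiableAt_const a)]

lemma fderiv_clm_apply_of_eventuallyEq {c : E → F →L[ℝ] G} {f : E → F} {g : E → G}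
    (hc : DifferentiableAt ℝ c x) (hf : DifferentiableAt ℝ f x)
    (h : (fun t => c t (f t)) =ᶠ[𝓝 x] g) (u : E) :
    fderiv ℝ c x u (f x) + c x (fderiv ℝ f x u) = fderiv ℝ g x u := by
  rw [← h.fderiv_eq, fderiv_clm_apply hc hf]
  simp [add_comm]

lemma hasFDerivAt_omega_left {g : E → Vec} {g' : E →L[ℝ] Vec} (hg : HasFDerivAt g g' x)
    (b : Vec) : HasFDerivAt (fun t => Omega (g t) b) ((omegaRight b).comp g') x := by
  simpa [Function.comp_def] using (omegaRight b).hasFDerivAt.comp x hg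

lemma DifferentiableAt.omega_left {g : E → Vec} (hg : DifferentiableAt ℝ g x) (b : Vec) :
    DifferentiableAt ℝ (fun t => Omega (g t) b) x :=
  (hasFDerivAt_omega_left hg.hasFDerivAt b).differentiableAt

lemma fderiv_omega_left {g : E → Vec} (hg : DifferentiableAt ℝ g x) (b : Vec) (u : E) :
    fderiv ℝ (fun t => Omega (g t) b) x u = Omega (fderiv ℝ g x u) b := by
  simp [(hasFDerivAt_omega_left hg.hasFDerivAt b).fderiv]

lemma ContDiffAt.omega_left {n : WithTop ℕ∞} {g : E → Vec} (hg : ContDiffAt ℝ n g x) (b : Vec) :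
    ContDiffAt ℝ n (fun t => Omega (g t) b) x := by
  simpa [Function.comp_def] using (omegaRight b).contDiff.contDiffAt.comp x hg

end Calculus

section ExteriorDerivative

variable {x : Vec}

lemma Filter.EventuallyEq.d3_eq {γ γ' : Vec → Vec → Vec → Vec → ℝ}
    (h : γ =ᶠ[𝓝 x] γ') : d3 γ x = d3 γ' x := by
  have hslice (p q r : Vec) :
      fderiv ℝ (fun y => γ y p q r) x = fderiv ℝ (fun y => γ' y p q r) x := by
    refine Filter.EventuallyEq.fderiv_eq ?_
    filter_upwards [h] with y hy
    rw [hy]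
  funext a b c d
  simp only [d3, hslice]

lemma d1_sub {α β : Vec → Vec → ℝ} (hα : ∀ v, DifferentiableAt ℝ (fun y => α y v) x)
    (hβ : ∀ v, DifferentiableAt ℝ (fun y => β y v) x) :
    d1 (fun y v => α y v - β y v) x = fun u v => d1 α x u v - d1 β x u v := by
  funext u v
  simp only [d1, fderiv_fun_sub (hα _) (hβ _), sub_apply]
  ring

lemma w22_sub_right (A B B' : Vec → Vec → ℝ) (a b c d : Vec) :
    w22 A (fun u v => B u v - B' u v) a b c d = w22 A B a b c d - w22 A B' a b c d := by
  simp only [w22]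
  ring

lemma d3_w21_eq_w22_d1 (B : Vec → Vec → ℝ) {σ : Vec → Vec → ℝ}
    (hσ : ∀ v, DifferentiableAt ℝ (fun y => σ y v) x) (a b c d : Vec) :
    d3 (fun y => w21 B (σ y)) x a b c d = w22 B (d1 σ x) a b c d := by
  have hslice (p q r u : Vec) : fderiv ℝ (fun y => w21 B (σ y) p q r) x u =
      B p q * fderiv ℝ (fun y => σ y r) x u - B p r * fderiv ℝ (fun y => σ y q) x u
        + B q r * fderiv ℝ (fun y => σ y p) x u := by
    have := ((((hσ r).hasFDerivAt.const_mul (B p q)).fun_sub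
      ((hσ q).hasFDerivAt.const_mul (B p r))).fun_add
      ((hσ p).hasFDerivAt.const_mul (B q r))).fderiv
    simp only [w21, this, add_apply, sub_apply, smul_apply, smul_eq_mul]
  simp only [d3, hslice, w22, d1]
  ring

lemma d3_d2_eq_zero {β : Vec → Vec → Vec → ℝ}
    (hβ : ∀ p q, ContDiffAt ℝ 2 (fun t => β t p q) x) (a b c d : Vec) :
    d3 (d2 β) x a b c d = 0 := by
  have hsymm (p q : Vec) : IsSymmSndFDerivAt ℝ (fun t => β t p q) x :=
    (hβ p q).isSymmSndFDerivAt (by simp)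
  have hdiff (p q : Vec) : DifferentiableAt ℝ (fderiv ℝ (fun t => β t p q)) x :=
    ((hβ p q).fderiv_right (m := 1) (by norm_num)).differentiableAt one_ne_zero
  have hslice (p q r u : Vec) : fderiv ℝ (fun t => d2 β t p q r) x u =
      fderiv ℝ (fderiv ℝ (fun t => β t q r)) x u p
        - fderiv ℝ (fderiv ℝ (fun t => β t p r)) x u q
        + fderiv ℝ (fderiv ℝ (fun t => β t p q)) x u r := by
    have := ((((hdiff q r).hasFDerivAt.clm_apply (hasFDerivAt_const p x)).fun_sub
      ((hdiff p r).hasFDerivAt.clm_apply (hasFDerivAt_const q x))).fun_add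
      ((hdiff p q).hasFDerivAt.clm_apply (hasFDerivAt_const r x))).fderiv
    simp [d2, this]
  simp only [d3, hslice]
  rw [(hsymm c d).eq b a, (hsymm b d).eq c a, (hsymm b c).eq d a, (hsymm a d).eq c b,
    (hsymm a c).eq d b, (hsymm a b).eq d c]
  ring

theorem w22_d1_eq_zero_of_w21_eventuallyEq_d2 {β : Vec → Vec → Vec → ℝ} {σ : Vec → Vec → ℝ}
    (hβ : ∀ p q, ContDiffAt ℝ 2 (fun t => β t p q) x)
    (hσ : ∀ v, DifferentiableAt ℝ (fun y => σ y v) x)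
    (hexact : (fun y => w21 Omega (σ y)) =ᶠ[𝓝 x] d2 β) (a b c d : Vec) :
    w22 Omega (d1 σ x) a b c d = 0 := by
  rw [← d3_w21_eq_w22_d1 Omega hσ, hexact.d3_eq, d3_d2_eq_zero hβ]

end ExteriorDerivative

section MovingFrame

variable {P : Vec → Vec →L[ℝ] Vec} {y : Vec}

lemma omega_fderiv_apply_symm (hP : DifferentiableAt ℝ P y)
    (hsymm : ∀ᶠ t in 𝓝 y, ∀ a b, Omega (P t a) b = Omega a (P t b)) (u a b : Vec) :
    Omega (fderiv ℝ P y u a) b = Omega a (fderiv ℝ P y u b) := by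
  have hslice (v : Vec) : DifferentiableAt ℝ (fun t => P t v) y :=
    hP.clm_apply (differentiableAt_const v)
  have h : (fun t => Omega (P t a) b) =ᶠ[𝓝 y] fun t => -Omega (P t b) a := by
    filter_upwards [hsymm] with t ht
    rw [ht, Omega_comm]
  have := DFunLike.congr_fun (h.fderiv_eq (𝕜 := ℝ)) u
  simp only [fderiv_fun_neg, neg_apply, fderiv_omega_left (hslice _),
    fderiv_clm_apply_const hP] at this
  rw [this, Omega_comm a]

lemma fderiv_apply_proj_add_proj_fderiv (hP : DifferentiableAt ℝ P y)
    (hidem : ∀ᶠ t in 𝓝 y, ∀ v, P t (P t v) = P t v) (u v : Vec) :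
    fderiv ℝ P y u (P y v) + P y (fderiv ℝ P y u v) = fderiv ℝ P y u v := by
  have h := fderiv_clm_apply_of_eventuallyEq hP (hP.clm_apply (differentiableAt_const v))
    (hidem.mono fun t ht => ht v) u
  rwa [fderiv_clm_apply_const hP] at h

lemma sub_proj_vbracket_eq {X Y : Vec → Vec} (hP : DifferentiableAt ℝ P y)
    (hX : DifferentiableAt ℝ X y) (hY : DifferentiableAt ℝ Y y)
    (hPX : (fun t => P t (X t)) =ᶠ[𝓝 y] X) (hPY : (fun t => P t (Y t)) =ᶠ[𝓝 y] Y) :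
    vbracket X Y y - P y (vbracket X Y y) =
      fderiv ℝ P y (X y) (Y y) - fderiv ℝ P y (Y y) (X y) := by
  have eY := fderiv_clm_apply_of_eventuallyEq hP hY hPY (X y)
  have eX := fderiv_clm_apply_of_eventuallyEq hP hX hPX (Y y)
  simp only [vbracket, map_sub]
  linear_combination (norm := module) eX - eY

lemma proj_vbracket_eq {X Y : Vec → Vec} (hP : DifferentiableAt ℝ P y)
    (hX : DifferentiableAt ℝ X y) (hY : DifferentiableAt ℝ Y y)
    (hPX : (fun t => P t (X t)) =ᶠ[𝓝 y] 0) (hPY : (fun t => P t (Y t)) =ᶠ[𝓝 y] 0) :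
    P y (vbracket X Y y) = fderiv ℝ P y (Y y) (X y) - fderiv ℝ P y (X y) (Y y) := by
  have eY := fderiv_clm_apply_of_eventuallyEq hP hY hPY (X y)
  have eX := fderiv_clm_apply_of_eventuallyEq hP hX hPX (Y y)
  simp only [fderiv_zero, Pi.zero_apply, zero_apply] at eX eY
  simp only [vbracket, map_sub]
  linear_combination (norm := module) eY - eX

end MovingFrame

/-- Wherever `P x` is `Ω`-symmetric, this is the form `ω` of the paper. -/
def projForm (P : Vec → Vec →L[ℝ] Vec) (x u v : Vec) : ℝ := Omega (P x u) v

section ProjForm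

variable {P : Vec → Vec →L[ℝ] Vec} {y : Vec}

lemma ContDiffAt.projForm {n : WithTop ℕ∞} (hP : ContDiffAt ℝ n P y) (a b : Vec) :
    ContDiffAt ℝ n (fun t => projForm P t a b) y :=
  (hP.clm_apply contDiffAt_const).omega_left b

lemma d2_projForm (hP : DifferentiableAt ℝ P y) (u v w : Vec) :
    d2 (projForm P) y u v w = Omega (fderiv ℝ P y u v) w - Omega (fderiv ℝ P y v u) w
      + Omega (fderiv ℝ P y w u) v := by
  have hslice (a b c : Vec) :
      fderiv ℝ (fun t => projForm P t a b) y c = Omega (fderiv ℝ P y c a) b := by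
    unfold projForm
    rw [fderiv_omega_left (hP.clm_apply (differentiableAt_const a)),
      fderiv_clm_apply_const hP]
  simp only [d2, hslice]

theorem d2_projForm_eq_w21 {X Y X' Y' : Vec → Vec} (hP : DifferentiableAt ℝ P y)
    (hX : DifferentiableAt ℝ X y) (hY : DifferentiableAt ℝ Y y)
    (hX' : DifferentiableAt ℝ X' y) (hY' : DifferentiableAt ℝ Y' y)
    (hframe : ∀ᶠ t in 𝓝 y, IsFrameProjection (P t) (X t) (Y t) (X' t) (Y' t)) (u v w : Vec) :
    d2 (projForm P) y u v w = w21 Omega (fun v => Omega (vbracket X Y y - P y (vbracket X Y y)) v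
      - Omega (P y (vbracket X' Y' y)) v) u v w := by
  have hQsymm := omega_fderiv_apply_symm hP (hframe.mono fun t ht => ht.omega_apply_symm)
  have hQidem := fderiv_apply_proj_add_proj_fderiv hP (hframe.mono fun t ht => ht.apply_apply)
  have hZ := sub_proj_vbracket_eq hP hX hY (hframe.mono fun t ht => ht.apply_X)
    (hframe.mono fun t ht => ht.apply_Y)
  have hZ' := proj_vbracket_eq hP hX' hY' (hframe.mono fun t ht => ht.apply_X')
    (hframe.mono fun t ht => ht.apply_Y')
  have hσ (t : Vec) : Omega (vbracket X Y y - P y (vbracket X Y y)) t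
      - Omega (P y (vbracket X' Y' y)) t = Omega (fderiv ℝ P y (X y) (Y y)
        - fderiv ℝ P y (Y y) (X y) + fderiv ℝ P y (X' y) (Y' y) - fderiv ℝ P y (Y' y) (X' y)) t := by
    rw [hZ, hZ', ← Omega_sub_left]
    congr 1
    abel
  rw [d2_projForm hP, hframe.self_of_nhds.cyclic_sum_eq_wedge hQsymm hQidem]
  simp only [w21, hσ]

end ProjForm

lemma ContDiffAt.differentiableAt_vbracket {X Y : Vec → Vec} {x : Vec}
    (hX : ContDiffAt ℝ 2 X x) (hY : ContDiffAt ℝ 2 Y x) : DifferentiableAt ℝ (vbracket X Y) x := by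
  have hdX := (hX.fderiv_right (m := 1) (by norm_num)).differentiableAt one_ne_zero
  have hdY := (hY.fderiv_right (m := 1) (by norm_num)).differentiableAt one_ne_zero
  exact (hdY.clm_apply (hX.differentiableAt (by norm_num))).fun_sub
    (hdX.clm_apply (hY.differentiableAt (by norm_num)))

theorem stmt_7_general
    (U : Set Vec) (hU : IsOpen U)
    (X Y X' Y' : Vec → Vec) (P : Vec → Vec →L[ℝ] Vec)
    (hX : ContDiffOn ℝ (⊤ : ℕ∞) X U) (hY : ContDiffOn ℝ (⊤ : ℕ∞) Y U)
    (hX' : ContDiffOn ℝ (⊤ : ℕ∞) X' U) (hY' : ContDiffOn ℝ (⊤ : ℕ∞) Y' U)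
    (hP : ContDiffOn ℝ (⊤ : ℕ∞) P U)
    (hXY : ∀ x ∈ U, Omega (X x) (Y x) = 1)
    (hX'Y' : ∀ x ∈ U, Omega (X' x) (Y' x) = 1)
    (horth : ∀ x ∈ U, Omega (X x) (X' x) = 0 ∧ Omega (X x) (Y' x) = 0 ∧
      Omega (Y x) (X' x) = 0 ∧ Omega (Y x) (Y' x) = 0)
    (hProj : ∀ x ∈ U, P x (X x) = X x ∧ P x (Y x) = Y x ∧
      P x (X' x) = 0 ∧ P x (Y' x) = 0)
    (Z Z' : Vec → Vec)
    (hZ : Z = fun x => vbracket X Y x - P x (vbracket X Y x))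
    (hZ' : Z' = fun x => P x (vbracket X' Y' x))
    (ρ ρ' σ : Vec → Vec → ℝ)
    (hρ : ρ = fun x v => Omega (Z x) v)
    (hρ' : ρ' = fun x v => Omega (Z' x) v)
    (hσ : σ = fun x v => ρ x v - ρ' x v)
    :
    ∀ x ∈ U, ∀ a b c d : Vec,
      w22 Omega (d1 σ x) a b c d = 0 ∧
      w22 Omega (d1 ρ x) a b c d = w22 Omega (d1 ρ' x) a b c d := by
  intro x hx a b c d
  have C2 {G : Type} [NormedAddCommGroup G] [NormedSpace ℝ G] {F : Vec → G}
      (hF : ContDiffOn ℝ (⊤ : ℕ∞) F U) {y : Vec} (hy : y ∈ U) : ContDiffAt ℝ 2 F y :=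
    (hF.contDiffAt (hU.mem_nhds hy)).of_le (WithTop.coe_le_coe.mpr le_top)
  have C1 {G : Type} [NormedAddCommGroup G] [NormedSpace ℝ G] {F : Vec → G}
      (hF : ContDiffOn ℝ (⊤ : ℕ∞) F U) {y : Vec} (hy : y ∈ U) : DifferentiableAt ℝ F y :=
    (C2 hF hy).differentiableAt two_ne_zero
  have hframe : ∀ y ∈ U, IsFrameProjection (P y) (X y) (Y y) (X' y) (Y' y) := fun y hy =>
    ⟨⟨hXY y hy, hX'Y' y hy, (horth y hy).1, (horth y hy).2.1, (horth y hy).2.2.1,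
      (horth y hy).2.2.2⟩, (hProj y hy).1, (hProj y hy).2.1, (hProj y hy).2.2.1, (hProj y hy).2.2.2⟩
  have hρd (v : Vec) : DifferentiableAt ℝ (fun y => ρ y v) x := by
    have hb := (C2 hX hx).differentiableAt_vbracket (C2 hY hx)
    subst hρ hZ
    exact (hb.fun_sub ((C1 hP hx).clm_apply hb)).omega_left v
  have hρ'd (v : Vec) : DifferentiableAt ℝ (fun y => ρ' y v) x := by
    subst hρ' hZ'
    exact ((C1 hP hx).clm_apply ((C2 hX' hx).differentiableAt_vbracket (C2 hY' hx))).omega_left v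
  have hσ0 : w22 Omega (d1 σ x) a b c d = 0 := by
    refine w22_d1_eq_zero_of_w21_eventuallyEq_d2 (fun p q => (C2 hP hx).projForm p q)
      (hσ ▸ fun v => (hρd v).fun_sub (hρ'd v)) ?_ a b c d
    filter_upwards [hU.mem_nhds hx] with y hy
    funext u v w
    subst hσ hρ hρ' hZ hZ'
    exact (d2_projForm_eq_w21 (C1 hP hy) (C1 hX hy) (C1 hY hy) (C1 hX' hy) (C1 hY' hy)
      (Filter.mem_of_superset (hU.mem_nhds hy) hframe) u v w).symm
  refine ⟨hσ0, ?_⟩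
  rwa [hσ, d1_sub hρd hρ'd, w22_sub_right, sub_eq_zero] at hσ0

/-- for a non-Lagrangian 2-distribution `D` on `U ⊆ ℝ⁴` with
invariant 1-forms `ρ, ρ', σ = ρ − ρ'`, one has `Ω ∧ dσ = 0` and consequently
`Ω ∧ dρ = Ω ∧ dρ'` as 4-forms on `U`. -/
theorem stmt_7
    (U : Set Vec) (hU : IsOpen U)
    (X Y X' Y' : Vec → Vec) (P : Vec → Vec →L[ℝ] Vec)
    (hX : ContDiffOn ℝ (⊤ : ℕ∞) X U) (hY : ContDiffOn ℝ (⊤ : ℕ∞) Y U)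
    (hX' : ContDiffOn ℝ (⊤ : ℕ∞) X' U) (hY' : ContDiffOn ℝ (⊤ : ℕ∞) Y' U)
    (hP : ContDiffOn ℝ (⊤ : ℕ∞) P U)
    (hXY : ∀ x ∈ U, Omega (X x) (Y x) = 1)
    (hX'Y' : ∀ x ∈ U, Omega (X' x) (Y' x) = 1)
    (horth : ∀ x ∈ U, Omega (X x) (X' x) = 0 ∧ Omega (X x) (Y' x) = 0 ∧
      Omega (Y x) (X' x) = 0 ∧ Omega (Y x) (Y' x) = 0)
    (hProj : ∀ x ∈ U, P x (X x) = X x ∧ P x (Y x) = Y x ∧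
      P x (X' x) = 0 ∧ P x (Y' x) = 0)
    (Z Z' : Vec → Vec)
    (hZ : Z = fun x => vbracket X Y x - P x (vbracket X Y x))
    (hZ' : Z' = fun x => P x (vbracket X' Y' x))
    (ρ ρ' σ : Vec → Vec → ℝ)
    (hρ : ρ = fun x v => Omega (Z x) v)
    (hρ' : ρ' = fun x v => Omega (Z' x) v)
    (hσ : σ = fun x v => ρ x v - ρ' x v)
    (ω : Vec → Vec → Vec → ℝ)
    (hω : ω = fun x u v => (Omega (P x u) v + Omega u (P x v)) / 2)
    :
    ∀ x ∈ U, ∀ a b c d : Vec,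
      w22 Omega (d1 σ x) a b c d = 0 ∧
      w22 Omega (d1 ρ x) a b c d = w22 Omega (d1 ρ' x) a b c d :=
  stmt_7_general U hU X Y X' Y' P hX hY hX' hY' hP hXY hX'Y' horth hProj Z Z' hZ hZ' ρ ρ' σ hρ hρ'
    hσ
end
end

section
/- Let U ⊆ ℝ⁴ be open with coordinates (x,p,y,q), Ω = dp∧dx + dq∧dy, D a smooth function on U, and consider the 2-distribution spanned by ∂_p and ∂_x − D∂_q, with invariant vector fields Z = −D_p ∂_q, Z' = −D_q ∂_p and invariant 1-forms ρ = −D_p dy, ρ' = −D_q dx. Then the Lie derivatives satisfy: ℒ_Z ρ = −D_{pq}·ρ and ℒ_{Z'} ρ' = −D_{pq}·ρ'; moreover ℒ_Z ρ' = D_p D_{qq}·dx, so that ℒ_Z ρ' = (−D_p D_{qq}/D_q)·ρ' wherever D_q ≠ 0, and ℒ_{Z'} ρ = D_q D_{pp}·dy, so that ℒ_{Z'} ρ = (−D_q D_{pp}/D_p)·ρ wherever D_p ≠ 0. (The factors I¹²_D = −D_p D_{qq}/D_q and I²¹_D = −D_q D_{pp}/D_p are the special scalar differential invariants of such distributions.)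 -/
noncomputable section

/-- The `i`-th standard basis vector (so `e 0 = ∂_x`, `e 1 = ∂_p`, `e 2 = ∂_y`,
`e 3 = ∂_q`). -/
def e (i : Fin 4) : Vec := Pi.single i 1

/-- Partial derivative in the `i`-th coordinate direction. -/
def pd (i : Fin 4) (f : Vec → ℝ) : Vec → ℝ := fun z => fderiv ℝ f z (e i)

/-- Lie derivative of a (pointwise) 1-form `α` along a vector field `X`,
evaluated on a constant vector `v`. -/
def lie1 (X : Vec → Vec) (α : Vec → Vec → ℝ) : Vec → Vec → ℝ :=
  fun z v => fderiv ℝ (fun y => α y v) z (X z) + α z (fderiv ℝ X z v)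

/-! All four fields and forms have the shape `X = g • e i` and `α = f dx_k` with `i ≠ k`, so
`α (dX v)` vanishes and `ℒ_X α = g ∂_i f dx_k`. Substituting `g, f ∈ {-D_p, -D_q}` gives the four
formulas; for `ℒ_{Z'} ρ'` one also needs the symmetry `D_{qp} = D_{pq}` of second derivatives. -/

section LieDerivative

variable {f g D : Vec → ℝ} {z : Vec}

lemma pd_neg (i : Fin 4) : pd i (-f) z = -pd i f z := by
  simp only [pd, fderiv_neg, neg_apply]

lemma differentiableAt_pd (hD : ContDiffAt ℝ 2 D z) (i : Fin 4) :
    DifferentiableAt ℝ (pd i D) z :=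
  ((hD.fderiv_right (m := 1) le_rfl).differentiableAt one_ne_zero).clm_apply
    (differentiableAt_const (e i))

lemma pd_pd_comm (hD : ContDiffAt ℝ 2 D z) (i j : Fin 4) :
    pd i (pd j D) z = pd j (pd i D) z := by
  have hD' : DifferentiableAt ℝ (fderiv ℝ D) z :=
    (hD.fderiv_right (m := 1) le_rfl).differentiableAt one_ne_zero
  have hpd : ∀ k l, pd k (pd l D) z = fderiv ℝ (fderiv ℝ D) z (e k) (e l) := fun k l => by
    change fderiv ℝ (fun y => fderiv ℝ D y (e l)) z (e k) = _
    rw [fderiv_clm_apply hD' (differentiableAt_const _)]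
    simp
  rw [hpd, hpd, hD.isSymmSndFDerivAt (by simp [minSmoothness_of_isRCLikeNormedField])]

lemma lie1_smul_e (hf : DifferentiableAt ℝ f z) (hg : DifferentiableAt ℝ g z)
    {i k : Fin 4} (hik : i ≠ k) (v : Vec) :
    lie1 (fun y => g y • e i) (fun y v => f y * v k) z v = g z * pd i f z * v k := by
  have hek : e i k = 0 := Pi.single_eq_of_ne hik.symm 1
  simp only [lie1, pd, fderiv_mul_const hf, fderiv_smul_const hg, map_smul,
    smul_apply, ContinuousLinearMap.smulRight_apply, Pi.smul_apply, hek,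
    smul_eq_mul]
  ring

end LieDerivative

/-- for the 2-distribution `⟨∂_p, ∂_x − D∂_q⟩` with invariant
vector fields `Z = −D_p ∂_q`, `Z' = −D_q ∂_p` and invariant 1-forms
`ρ = −D_p dy`, `ρ' = −D_q dx`: `ℒ_Z ρ = −D_{pq}·ρ`, `ℒ_{Z'} ρ' = −D_{pq}·ρ'`,
`ℒ_Z ρ' = D_p D_{qq}·dx` (so `ℒ_Z ρ' = (−D_p D_{qq}/D_q)·ρ'` wherever
`D_q ≠ 0`), and `ℒ_{Z'} ρ = D_q D_{pp}·dy` (so `ℒ_{Z'} ρ = (−D_q D_{pp}/D_p)·ρ`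
wherever `D_p ≠ 0`). -/
theorem stmt_18 (U : Set Vec) (hU : IsOpen U)
    (D : Vec → ℝ) (hD : ContDiffOn ℝ (⊤ : ℕ∞) D U)
    (Z Z' : Vec → Vec)
    (hZ : Z = fun z => (-(pd 1 D z)) • e 3)
    (hZ' : Z' = fun z => (-(pd 3 D z)) • e 1)
    (ρ ρ' : Vec → Vec → ℝ)
    (hρ : ρ = fun z v => -(pd 1 D z) * v 2)
    (hρ' : ρ' = fun z v => -(pd 3 D z) * v 0) :
    ∀ z ∈ U, ∀ v : Vec,
      lie1 Z ρ z v = -(pd 3 (pd 1 D) z) * ρ z v ∧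
      lie1 Z' ρ' z v = -(pd 3 (pd 1 D) z) * ρ' z v ∧
      lie1 Z ρ' z v = pd 1 D z * pd 3 (pd 3 D) z * v 0 ∧
      (pd 3 D z ≠ 0 →
        lie1 Z ρ' z v = (-(pd 1 D z * pd 3 (pd 3 D) z) / pd 3 D z) * ρ' z v) ∧
      lie1 Z' ρ z v = pd 3 D z * pd 1 (pd 1 D) z * v 2 ∧
      (pd 1 D z ≠ 0 →
        lie1 Z' ρ z v = (-(pd 3 D z * pd 1 (pd 1 D) z) / pd 1 D z) * ρ z v) := by
  intro z hz v
  have hD2 : ContDiffAt ℝ 2 D z := (hD.contDiffAt (hU.mem_nhds hz)).of_le (WithTop.coe_le_coe.mpr le_top)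
  have hp := (differentiableAt_pd hD2 1).neg
  have hq := (differentiableAt_pd hD2 3).neg
  have hZρ := lie1_smul_e hp hp (by decide : (3 : Fin 4) ≠ 2) v
  have hZ'ρ' := lie1_smul_e hq hq (by decide : (1 : Fin 4) ≠ 0) v
  have hZρ' := lie1_smul_e hq hp (by decide : (3 : Fin 4) ≠ 0) v
  have hZ'ρ := lie1_smul_e hp hq (by decide : (1 : Fin 4) ≠ 2) v
  simp only [pd_neg, Pi.neg_apply] at hZρ hZ'ρ' hZρ' hZ'ρ
  subst hZ hZ' hρ hρ'
  rw [pd_pd_comm hD2 1 3] at hZ'ρ'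
  refine ⟨?_, ?_, ?_, fun hq0 => ?_, ?_, fun hp0 => ?_⟩
  · rw [hZρ]; ring
  · rw [hZ'ρ']; ring
  · rw [hZρ']; ring
  · rw [hZρ']; field_simp
  · rw [hZ'ρ]; ring
  · rw [hZ'ρ]; field_simp
end
end
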